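/- arXiv:1202.0702 — 7 statements merged into one kernel-verified Lean document; each statement's English description precedes it below -/
import Mathlib

section
/- Let α be a primitive element of GF(q) with q = 2^r, and let B be the q×q matrix indexed by elements x, y of GF(q) (enumerated as 1, α, …, α^{q-2}, 0) with entry B_{x,y} = x − y. Then every 2×2 submatrix of B either contains a zero entry or is nonsingular. -/
/-- Every 2×2 submatrix of the Latin-square base matrix `[x - y]` over GF(2^r)
either contains a zero entry or is nonsingular. -/
theorem stmt3 {r : ℕ} {F : Type*} [Field F] [Fintype F] [CharP F 2]
    (hF : Fintype.card F = 2 ^ r)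
    (α : F) (hα : orderOf α = 2 ^ r - 1)
    (x1 x2 y1 y2 : F) (hx : x1 ≠ x2) (hy : y1 ≠ y2) :
    (x1 - y1 = 0 ∨ x1 - y2 = 0 ∨ x2 - y1 = 0 ∨ x2 - y2 = 0) ∨
    (x1 - y1) * (x2 - y2) - (x1 - y2) * (x2 - y1) ≠ 0 := by
  right
  have h : (x1 - y1) * (x2 - y2) - (x1 - y2) * (x2 - y1) = (x1 - x2) * (y1 - y2) := by ring
  rw [h]
  exact mul_ne_zero (sub_ne_zero.2 hx) (sub_ne_zero.2 hy)
end

section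
/- Let H be the me×ne binary matrix obtained by replacing each nonzero entry α^k of an m×n base matrix B over GF(2^r) by the e×e circulant permutation matrix with 1 at position k of the generator, and each zero entry by the e×e zero matrix (e = 2^r − 1). If every 2×2 submatrix of B contains a zero entry or is nonsingular, then no two rows of H have more than one common position with identical nonzero components (the RC-constraint). -/
/-- If the base matrix satisfies the 2×2 SM-constraint, its CPM dispersion
satisfies the row–column (RC) constraint: no two distinct rows share more than
one position where both are nonzero. -/
theorem stmt9 {r e m n : ℕ} (he : e = 2 ^ r - 1) (he0 : 0 < e)
    {F : Type*} [Field F] [Fintype F] [DecidableEq F] [CharP F 2]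
    (hF : Fintype.card F = 2 ^ r)
    (α : F) (hα : orderOf α = e)
    (B : Matrix (Fin m) (Fin n) F)
    (hSM : ∀ i1 i2 : Fin m, ∀ j1 j2 : Fin n, i1 ≠ i2 → j1 ≠ j2 →
      (B i1 j1 = 0 ∨ B i1 j2 = 0 ∨ B i2 j1 = 0 ∨ B i2 j2 = 0) ∨
      B i1 j1 * B i2 j2 - B i1 j2 * B i2 j1 ≠ 0)
    (H : Matrix (Fin m × Fin e) (Fin n × Fin e) (ZMod 2))
    (hH : ∀ p q, H p q = if α ^ ((q.2 - p.2 : Fin e) : ℕ) = B p.1 q.1 then 1 else 0) :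
    ∀ r1 r2 : Fin m × Fin e, r1 ≠ r2 →
      ∀ c1 c2 : Fin n × Fin e,
        H r1 c1 ≠ 0 → H r2 c1 ≠ 0 → H r1 c2 ≠ 0 → H r2 c2 ≠ 0 → c1 = c2 := by
  haveI : NeZero e := ⟨he0.ne'⟩
  have hαne : α ≠ 0 := by
    intro h
    have h1 := pow_orderOf_eq_one α
    rw [hα, h, zero_pow he0.ne'] at h1
    exact one_ne_zero h1.symm
  have hinj : ∀ x y : Fin e, α ^ (x : ℕ) = α ^ (y : ℕ) → x = y := by
    intro x y hxy
    exact Fin.ext (pow_injOn_Iio_orderOf (by simpa [hα] using x.isLt)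
      (by simpa [hα] using y.isLt) hxy)
  have hadd : ∀ x y : Fin e, α ^ (x : ℕ) * α ^ (y : ℕ) = α ^ ((x + y : Fin e) : ℕ) := by
    intro x y
    rw [← pow_add]
    have : ((x + y : Fin e) : ℕ) = ((x : ℕ) + (y : ℕ)) % orderOf α := by
      rw [hα]; rfl
    rw [this, pow_mod_orderOf]
  rintro ⟨i1, a⟩ ⟨i2, b⟩ hr ⟨j1, s⟩ ⟨j2, t⟩ h11 h21 h12 h22
  rw [hH] at h11 h21 h12 h22
  simp only at h11 h21 h12 h22
  have e11 : α ^ ((s - a : Fin e) : ℕ) = B i1 j1 := by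
    by_contra h; simp [h] at h11
  have e21 : α ^ ((s - b : Fin e) : ℕ) = B i2 j1 := by
    by_contra h; simp [h] at h21
  have e12 : α ^ ((t - a : Fin e) : ℕ) = B i1 j2 := by
    by_contra h; simp [h] at h12
  have e22 : α ^ ((t - b : Fin e) : ℕ) = B i2 j2 := by
    by_contra h; simp [h] at h22
  have hi : i1 ≠ i2 := by
    rintro rfl
    apply hr
    have hab : s - a = s - b := hinj _ _ (e11.trans e21.symm)
    have : a = b := sub_right_inj.mp hab
    simp [this]
  have hj : j1 = j2 := by
    by_contra hjne
    rcases hSM i1 i2 j1 j2 hi hjne with h | h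
    · have n11 : B i1 j1 ≠ 0 := e11 ▸ pow_ne_zero _ hαne
      have n12 : B i1 j2 ≠ 0 := e12 ▸ pow_ne_zero _ hαne
      have n21 : B i2 j1 ≠ 0 := e21 ▸ pow_ne_zero _ hαne
      have n22 : B i2 j2 ≠ 0 := e22 ▸ pow_ne_zero _ hαne
      tauto
    · apply h
      rw [← e11, ← e21, ← e12, ← e22, hadd, hadd]
      have : (s - a) + (t - b) = (t - a) + (s - b) := by abel
      rw [this, sub_self]
  subst hj
  have hst : s = t := by
    have h : s - a = t - a := hinj _ _ (e11.trans e12.symm)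
    exact sub_left_inj.mp h
  simp [hst]
end

section
/- Let p be a prime, β an element of multiplicative order p in GF(2^r), and B = [β^{ij}]_{0≤i<m, 0≤j<n} with 1 ≤ m ≤ n ≤ p. Then for every t with 1 ≤ t ≤ p−1, the t-th Hadamard power B^{∘t} = [β^{ijt}] has rank m, while B^{∘0} (the all-ones matrix) has rank 1. -/
/-!
Since `p` is prime and `p ∤ t`, the element `β ^ t` again has order `p`, so
`B^{∘t} = [(β ^ t) ^ (i j)]` is a Vandermonde-type matrix in `γ = β ^ t`. Its leading
`m × m` block is the Vandermonde matrix of the distinct nodes `γ ^ i` (`i < m ≤ p`),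
which has nonzero determinant, so `B^{∘t}` has full row rank `m`.
-/

namespace Matrix

theorem rank_of_pow_mul {R : Type*} [CommRing R] [IsDomain R] {m n : ℕ} (γ : R)
    (hmn : m ≤ n) (hm : m ≤ orderOf γ) :
    (of fun (i : Fin m) (j : Fin n) => γ ^ ((i : ℕ) * j)).rank = m := by
  have hinj : Function.Injective fun i : Fin m => γ ^ (i : ℕ) := fun a b h =>
    Fin.ext <| pow_injOn_Iio_orderOf (Set.mem_Iio.mpr (by omega)) (Set.mem_Iio.mpr (by omega)) h
  have hdet : (vandermonde fun i : Fin m => γ ^ (i : ℕ)).det ≠ 0 :=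
    det_vandermonde_ne_zero_iff.mpr hinj
  refine le_antisymm (rank_le_height _) ?_
  calc m = (vandermonde fun i : Fin m => γ ^ (i : ℕ)).rank := by
        rw [rank_of_det_ne_zero hdet, Fintype.card_fin]
    _ = ((of fun (i : Fin m) (j : Fin n) => γ ^ ((i : ℕ) * j)).submatrix id
          (Fin.castLE hmn)).rank := by
        congr 1
        ext i j
        simp [vandermonde_apply, pow_mul]
    _ ≤ _ := rank_submatrix_le _ _ _

theorem rank_of_const_one {R : Type*} [CommRing R] [Nontrivial R] {m n : Type*}
    [Fintype m] [Fintype n] [Nonempty m] [Nonempty n] :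
    (of fun (_ : m) (_ : n) => (1 : R)).rank = 1 := by
  refine le_antisymm (by simpa [vecMulVec] using rank_vecMulVec_le (1 : m → R) (1 : n → R)) ?_
  calc 1 = (1 : Matrix (Fin 1) (Fin 1) R).rank := by rw [rank_one, Fintype.card_fin]
    _ = ((of fun (_ : m) (_ : n) => (1 : R)).submatrix
          (fun _ : Fin 1 => Classical.arbitrary m) (fun _ : Fin 1 => Classical.arbitrary n)).rank := by
        congr 1
        ext i j
        simp [one_apply, Subsingleton.elim i j]
    _ ≤ _ := rank_submatrix_le _ _ _

end Matrix

theorem stmt11_general {p m n : ℕ} (hp : p.Prime)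
    {F : Type*} [Field F]
    (β : F) (hβ : orderOf β = p)
    (hm : 1 ≤ m) (hmn : m ≤ n) (hnp : n ≤ p) :
    (∀ t : ℕ, 1 ≤ t → t ≤ p - 1 →
      (Matrix.of fun (i : Fin m) (j : Fin n) => β ^ ((i : ℕ) * (j : ℕ) * t)).rank = m) ∧
    (Matrix.of fun (_ : Fin m) (_ : Fin n) => (1 : F)).rank = 1 := by
  refine ⟨fun t ht1 ht2 => ?_, ?_⟩
  · have hcop : (orderOf β).Coprime t :=
      hβ ▸ (hp.coprime_iff_not_dvd.mpr <| Nat.not_dvd_of_pos_of_lt ht1 (by omega))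
    have hγ : orderOf (β ^ t) = p := hcop.orderOf_pow.trans hβ
    simpa only [← pow_mul, mul_comm _ t] using
      Matrix.rank_of_pow_mul (β ^ t) hmn (hγ ▸ hmn.trans hnp)
  · have : Nonempty (Fin m) := ⟨⟨0, by omega⟩⟩
    have : Nonempty (Fin n) := ⟨⟨0, by omega⟩⟩
    exact Matrix.rank_of_const_one

/-- All Hadamard powers `B^{∘t}`, `1 ≤ t ≤ p-1`, of the m×n Vandermonde base
matrix `[β^{ij}]` (β of prime order p, m ≤ n ≤ p) have rank m, while the
0-th Hadamard power (all-ones matrix) has rank 1. -/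
theorem stmt11 {r p m n : ℕ} (hp : p.Prime)
    {F : Type*} [Field F] [Fintype F] [CharP F 2] (hF : Fintype.card F = 2 ^ r)
    (β : F) (hβ : orderOf β = p)
    (hm : 1 ≤ m) (hmn : m ≤ n) (hnp : n ≤ p) :
    (∀ t : ℕ, 1 ≤ t → t ≤ p - 1 →
      (Matrix.of fun (i : Fin m) (j : Fin n) => β ^ ((i : ℕ) * (j : ℕ) * t)).rank = m) ∧
    (Matrix.of fun (_ : Fin m) (_ : Fin n) => (1 : F)).rank = 1 :=
  stmt11_general hp β hβ hm hmn hnp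
end

section
/- Let e = 2^r − 1. For an m×n array H of e×e circulant permutation matrices and zero matrices over GF(2) that is the e-fold dispersion of a base matrix B over GF(2^r), rank(H) = Σ_{t=0}^{e−1} rank(B^{∘t}), where B^{∘t} is the t-th Hadamard power of B with the convention b^0 = 1 for b ≠ 0 and 0^0 = 0. -/
/-!
Over `F` the `(s, t)` entry of the `(i, j)` block of `H` is `[α ^ (t - s) = b]` with
`b = B i j`. For `γ ^ e = 1` one has `∑_{u < e} γ ^ u = [γ = 1]`, because `e = |F| - 1 = 1`
in characteristic two; applied to `γ = α ^ s * b / α ^ t` this says that `H` is conjugate, by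
the invertible discrete Fourier (Vandermonde) matrices of `α` and `α⁻¹`, to the block diagonal
matrix with blocks `B^{∘0}, …, B^{∘(e-1)}`. The rank is unchanged by extending scalars from
`GF(2)` to `F` and by invertible factors, and the rank of a block diagonal matrix is the sum of
the ranks of its blocks.
-/

open Matrix Module Submodule Kronecker

section BaseChange

variable {K L : Type*} [Field K] [Field L]

theorem finrank_span_range_le_of_linearIndepOn {ι V W : Type*} [Finite ι]
    [AddCommGroup V] [Module K V] [AddCommGroup W] [Module L W] {v : ι → V} {w : ι → W}
    (hvw : ∀ s : Set ι, LinearIndepOn K v s → LinearIndepOn L w s) :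
    finrank K (span K (Set.range v)) ≤ finrank L (span L (Set.range w)) := by
  obtain ⟨b, -, -, hspan, hb⟩ :=
    exists_linearIndepOn_extension (linearIndepOn_empty K v) (Set.empty_subset Set.univ)
  have : Fintype b := Fintype.ofFinite b
  rw [Set.image_univ] at hspan
  calc finrank K (span K (Set.range v))
      = finrank K (span K (v '' b)) := by
        rw [le_antisymm (span_le.mpr hspan) (span_mono (Set.image_subset_range v b))]
    _ = Fintype.card b := by rw [Set.image_eq_range]; exact finrank_span_eq_card hb
    _ = finrank L (span L (w '' b)) := by
        rw [Set.image_eq_range]; exact (finrank_span_eq_card (hvw b hb)).symm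
    _ ≤ finrank L (span L (Set.range w)) :=
        have := FiniteDimensional.span_of_finite L (Set.finite_range w)
        Submodule.finrank_mono (span_mono (Set.image_subset_range w b))

theorem Matrix.rank_map_ringHom {m n : Type*} [Finite m] [Fintype n] (f : K →+* L)
    (A : Matrix m n K) : (A.map f).rank = A.rank := by
  let := f.toAlgebra
  have hcols (s : Set n) : LinearIndepOn L (A.map f)ᵀ s ↔ LinearIndepOn K Aᵀ s :=
    linearIndependent_algebraMap_comp_iff (v := fun j : s => Aᵀ j)
  rw [rank_eq_finrank_span_cols, rank_eq_finrank_span_cols]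
  exact le_antisymm (finrank_span_range_le_of_linearIndepOn fun s => (hcols s).mp)
    (finrank_span_range_le_of_linearIndepOn fun s => (hcols s).mpr)

end BaseChange

section BlockDiagonal

theorem LinearMap.range_piMap {R ι : Type*} [Semiring R] {φ ψ : ι → Type*}
    [∀ i, AddCommMonoid (φ i)] [∀ i, Module R (φ i)]
    [∀ i, AddCommMonoid (ψ i)] [∀ i, Module R (ψ i)] (f : ∀ i, φ i →ₗ[R] ψ i) :
    LinearMap.range (LinearMap.piMap f) =
      Submodule.pi Set.univ fun i => LinearMap.range (f i) :=
  SetLike.coe_injective (by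
    rw [LinearMap.coe_range, LinearMap.coe_piMap, Set.range_piMap, Submodule.coe_pi]
    simp only [LinearMap.coe_range])

variable {K : Type*} [Field K]

theorem LinearMap.finrank_range_piMap {ι : Type*} [Fintype ι] {φ ψ : ι → Type*}
    [∀ i, AddCommGroup (φ i)] [∀ i, Module K (φ i)]
    [∀ i, AddCommGroup (ψ i)] [∀ i, Module K (ψ i)] [∀ i, FiniteDimensional K (ψ i)]
    (f : ∀ i, φ i →ₗ[K] ψ i) :
    finrank K (LinearMap.range (LinearMap.piMap f)) = ∑ i, finrank K (LinearMap.range (f i)) := by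
  have hrange : LinearMap.range (LinearMap.piMap f) =
      LinearMap.range (LinearMap.piMap fun i => (LinearMap.range (f i)).subtype) := by
    simp only [LinearMap.range_piMap, Submodule.range_subtype]
  rw [hrange, LinearMap.finrank_range_of_inj
      (Function.Injective.piMap fun i => Subtype.val_injective), finrank_pi_fintype]

def LinearEquiv.prodCommCurry (R m o : Type*) [Semiring R] : (m × o → R) ≃ₗ[R] (o → m → R) :=
  LinearEquiv.funCongrLeft R R (Equiv.prodComm o m) ≪≫ₗ LinearEquiv.curry R R o m

theorem Matrix.rank_blockDiagonal {m n o : Type*} [Fintype m] [Fintype n] [Fintype o]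
    [DecidableEq o] (M : o → Matrix m n K) :
    (blockDiagonal M).rank = ∑ k, (M k).rank := by
  classical
  have hconj :
      (LinearEquiv.prodCommCurry K m o).toLinearMap ∘ₗ (blockDiagonal M).mulVecLin =
        LinearMap.piMap (fun k => (M k).mulVecLin) ∘ₗ
          (LinearEquiv.prodCommCurry K n o).toLinearMap := by
    refine LinearMap.ext fun v => funext₂ fun k i => ?_
    simp [LinearEquiv.prodCommCurry, mulVec, dotProduct, Fintype.sum_prod_type,
      blockDiagonal_apply]
  rw [rank, ← LinearEquiv.finrank_map_eq (LinearEquiv.prodCommCurry K m o),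
    ← LinearMap.range_comp, hconj, LinearMap.range_comp_of_range_eq_top _ (LinearEquiv.range _),
    LinearMap.finrank_range_piMap]
  rfl

end BlockDiagonal

section Fourier

theorem orderOf_inv₀ {G : Type*} [GroupWithZero G] (a : G) : orderOf a⁻¹ = orderOf a := by
  simp [orderOf_eq_orderOf_iff, inv_pow]

theorem pow_finSub_mul_pow {M : Type*} [Monoid M] {α : M} {e : ℕ} (hα : orderOf α = e)
    (s t : Fin e) : α ^ ((t - s : Fin e) : ℕ) * α ^ (s : ℕ) = α ^ (t : ℕ) := by
  have : NeZero e := ⟨s.pos.ne'⟩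
  have hval : ((t - s + s : Fin e) : ℕ) = t := congrArg Fin.val (sub_add_cancel t s)
  rw [← pow_add, ← pow_mod_orderOf, hα, ← Fin.val_add, hval]

theorem geom_sum_eq_ite_of_pow_eq_one {K : Type*} [Field K] [DecidableEq K] {γ : K} {e : ℕ}
    (hγ : γ ^ e = 1) (he : (e : K) = 1) :
    ∑ u ∈ Finset.range e, γ ^ u = if γ = 1 then 1 else 0 := by
  split_ifs with h
  · simp [h, he]
  · rw [geom_sum_eq h, hγ, sub_self, zero_div]

theorem det_vandermonde_pow_ne_zero {K : Type*} [Field K] {α : K} {e : ℕ}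
    (hα : orderOf α = e) : (vandermonde fun s : Fin e => α ^ (s : ℕ)).det ≠ 0 := by
  rw [det_vandermonde_ne_zero_iff]
  intro s t hst
  exact Fin.ext (pow_injOn_Iio_orderOf (by rw [hα]; exact s.isLt) (by rw [hα]; exact t.isLt) hst)

theorem isUnit_det_one_kronecker {R m n : Type*} [CommRing R] [Fintype m] [Fintype n]
    [DecidableEq m] [DecidableEq n] {A : Matrix n n R} (hA : IsUnit A.det) :
    IsUnit ((1 : Matrix m m R) ⊗ₖ A).det := by
  rw [det_kronecker, det_one, one_pow, one_mul]
  exact hA.pow _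

theorem one_kronecker_mul_blockDiagonal_mul_one_kronecker_apply {R m n o : Type*} [Semiring R]
    [Fintype m] [Fintype n] [Fintype o] [DecidableEq m] [DecidableEq n] [DecidableEq o]
    (A C : Matrix o o R) (M : o → Matrix m n R) (i : m) (j : n) (s t : o) :
    ((1 : Matrix m m R) ⊗ₖ A * blockDiagonal M * (1 : Matrix n n R) ⊗ₖ C) (i, s) (j, t) =
      ∑ u, A s u * M u i j * C u t := by
  simp [mul_apply, Fintype.sum_prod_type, one_apply, blockDiagonal_apply, ite_mul, mul_ite]

end Fourier

-- Zero entries stay zero also for `t = 0`, unlike `0 ^ 0 = 1`.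
def Matrix.hadamardPow {R m n : Type*} [MonoidWithZero R] [DecidableEq R] (B : Matrix m n R)
    (t : ℕ) : Matrix m n R :=
  of fun i j => if B i j = 0 then 0 else B i j ^ t

section FiniteField

variable {F : Type*} [Field F] [Fintype F] {e : ℕ}

theorem natCast_eq_one_of_card_eq_add_one [CharP F 2] (hcard : Fintype.card F = e + 1) :
    (e : F) = 1 := by
  have h := FiniteField.cast_card_eq_zero F
  rw [hcard, Nat.cast_add_one, add_eq_zero_iff_eq_neg] at h
  rw [h, CharTwo.neg_eq]

theorem sum_vandermonde_mul_hadamardPow_mul [DecidableEq F] [CharP F 2]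
    (hcard : Fintype.card F = e + 1) {α : F} (hα : orderOf α = e) (b : F) (s t : Fin e) :
    ∑ u : Fin e, (α ^ (s : ℕ)) ^ (u : ℕ) * (if b = 0 then 0 else b ^ (u : ℕ)) *
      (α⁻¹ ^ (u : ℕ)) ^ (t : ℕ) = if α ^ ((t - s : Fin e) : ℕ) = b then 1 else 0 := by
  have hαe : α ^ e = 1 := hα ▸ pow_orderOf_eq_one α
  have hα0 : α ≠ 0 := by rintro rfl; simp [zero_pow s.pos.ne'] at hαe
  by_cases hb : b = 0
  · simp [hb, hα0]
  set γ := α ^ (s : ℕ) * b / α ^ (t : ℕ)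
  have hterm (u : Fin e) : (α ^ (s : ℕ)) ^ (u : ℕ) * (if b = 0 then 0 else b ^ (u : ℕ)) *
      (α⁻¹ ^ (u : ℕ)) ^ (t : ℕ) = γ ^ (u : ℕ) := by
    rw [if_neg hb]
    simp only [γ]
    ring
  have hγe : γ ^ e = 1 := by
    have hbe : b ^ e = 1 := by
      rw [← FiniteField.pow_card_sub_one_eq_one b hb, hcard, Nat.add_sub_cancel]
    rw [div_pow, mul_pow, hbe, ← pow_mul, ← pow_mul, mul_comm (s : ℕ), mul_comm (t : ℕ), pow_mul,
      pow_mul, hαe]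
    simp
  have hγ : γ = 1 ↔ α ^ ((t - s : Fin e) : ℕ) = b := by
    rw [div_eq_one_iff_eq (pow_ne_zero _ hα0), ← pow_finSub_mul_pow hα s t, mul_comm, eq_comm,
      mul_left_inj' (pow_ne_zero _ hα0)]
  rw [Finset.sum_congr rfl fun u _ => hterm u, Fin.sum_univ_eq_sum_range (γ ^ ·),
    geom_sum_eq_ite_of_pow_eq_one hγe (natCast_eq_one_of_card_eq_add_one hcard)]
  exact if_congr hγ rfl rfl

theorem map_castHom_eq_kronecker_mul_blockDiagonal_mul [DecidableEq F] [CharP F 2]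
    (hcard : Fintype.card F = e + 1) {α : F} (hα : orderOf α = e)
    {m n : Type*} [Fintype m] [Fintype n] [DecidableEq m] [DecidableEq n]
    (B : Matrix m n F) (H : Matrix (m × Fin e) (n × Fin e) (ZMod 2))
    (hH : ∀ p q, H p q = if α ^ ((q.2 - p.2 : Fin e) : ℕ) = B p.1 q.1 then 1 else 0) :
    H.map (ZMod.castHom (dvd_refl 2) F) =
      (1 : Matrix m m F) ⊗ₖ vandermonde (fun s : Fin e => α ^ (s : ℕ)) *
        blockDiagonal (fun u : Fin e => B.hadamardPow u) *
        (1 : Matrix n n F) ⊗ₖ vandermonde (fun s : Fin e => α⁻¹ ^ (s : ℕ)) := by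
  ext ⟨i, s⟩ ⟨j, t⟩
  rw [one_kronecker_mul_blockDiagonal_mul_one_kronecker_apply]
  simp only [vandermonde_apply, hadamardPow, of_apply, map_apply, hH]
  rw [sum_vandermonde_mul_hadamardPow_mul hcard hα]
  split_ifs <;> simp

end FiniteField

theorem stmt12_general {r e m n : ℕ} (he : e = 2 ^ r - 1)
    {F : Type*} [Field F] [Fintype F] [DecidableEq F] [CharP F 2]
    (hF : Fintype.card F = 2 ^ r)
    (α : F) (hα : orderOf α = e)
    (B : Matrix (Fin m) (Fin n) F)
    (H : Matrix (Fin m × Fin e) (Fin n × Fin e) (ZMod 2))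
    (hH : ∀ p q, H p q = if α ^ ((q.2 - p.2 : Fin e) : ℕ) = B p.1 q.1 then 1 else 0) :
    H.rank = ∑ t ∈ Finset.range e,
      (Matrix.of fun i j => if B i j = 0 then (0 : F) else (B i j) ^ t).rank := by
  have hcard : Fintype.card F = e + 1 := by
    rw [hF, he, Nat.sub_add_cancel Nat.one_le_two_pow]
  have hV := (det_vandermonde_pow_ne_zero hα).isUnit
  have hV' := (det_vandermonde_pow_ne_zero ((orderOf_inv₀ α).trans hα)).isUnit
  rw [← rank_map_ringHom (ZMod.castHom (dvd_refl 2) F),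
    map_castHom_eq_kronecker_mul_blockDiagonal_mul hcard hα B H hH,
    rank_mul_eq_left_of_isUnit_det _ _ (isUnit_det_one_kronecker hV'),
    rank_mul_eq_right_of_isUnit_det _ _ (isUnit_det_one_kronecker hV), rank_blockDiagonal]
  exact Fin.sum_univ_eq_sum_range (fun t => (B.hadamardPow t).rank) e

/-- The GF(2)-rank of the CPM/ZM dispersion of a base matrix `B` over GF(2^r)
equals the sum of the GF(2^r)-ranks of the Hadamard powers `B^{∘t}`,
`0 ≤ t < e`, with the convention `0^0 = 0`. -/
theorem stmt12 {r e m n : ℕ} (he : e = 2 ^ r - 1) (he0 : 0 < e)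
    {F : Type*} [Field F] [Fintype F] [DecidableEq F] [CharP F 2]
    (hF : Fintype.card F = 2 ^ r)
    (α : F) (hα : orderOf α = e)
    (B : Matrix (Fin m) (Fin n) F)
    (H : Matrix (Fin m × Fin e) (Fin n × Fin e) (ZMod 2))
    (hH : ∀ p q, H p q = if α ^ ((q.2 - p.2 : Fin e) : ℕ) = B p.1 q.1 then 1 else 0) :
    H.rank = ∑ t ∈ Finset.range e,
      (Matrix.of fun i j => if B i j = 0 then (0 : F) else (B i j) ^ t).rank :=
  stmt12_general he hF α hα B H hH
end

section
/- Let B be an m×n matrix over GF(2^r) and t an integer with 0 < t < 2^r − 1 whose binary representation has τ(t) ones. Then rank(B^{∘t}) ≤ rank(B)^{τ(t)}. -/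
open Submodule Set Module Matrix Pointwise

/-- If all columns of `M` lie in the span of a finite family `v`, then the rank of `M`
is at most the cardinality of the index type. -/
lemma rank_le_of_cols_mem {m n : ℕ} {F : Type*} [Field F] {ι : Type*} [Fintype ι]
    (M : Matrix (Fin m) (Fin n) F) (v : ι → (Fin m → F))
    (h : ∀ j, Mᵀ j ∈ Submodule.span F (Set.range v)) :
    M.rank ≤ Fintype.card ι := by
  classical
  rw [Matrix.rank_eq_finrank_span_cols]
  have h1 : Submodule.span F (Set.range Mᵀ) ≤ Submodule.span F (Set.range v) :=
    Submodule.span_le.2 (by rintro _ ⟨j, rfl⟩; exact h j)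
  calc finrank F (span F (range Mᵀ)) ≤ finrank F (span F (range v)) :=
        Submodule.finrank_mono h1
    _ ≤ (range v).toFinset.card := finrank_span_le_card _
    _ ≤ Fintype.card ι := by
        convert Fintype.card_range_le v; rw [Set.toFinset_card]

/-- A basis, indexed by `Fin A.rank`, of the column span of `A`, viewed as vectors. -/
lemma exists_col_basis {m n : ℕ} {F : Type*} [Field F] (A : Matrix (Fin m) (Fin n) F) :
    ∃ v : Fin A.rank → (Fin m → F),
      ∀ j, Aᵀ j ∈ Submodule.span F (Set.range v) := by
  set S : Submodule F (Fin m → F) := Submodule.span F (Set.range Aᵀ) with hS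
  have hrank : A.rank = finrank F S := Matrix.rank_eq_finrank_span_cols A
  have b : Basis (Fin (finrank F S)) F S := Module.finBasis F S
  refine ⟨fun k => (b (Fin.cast hrank k) : Fin m → F), fun j => ?_⟩
  have hspan : Submodule.span F (Set.range fun k : Fin A.rank =>
      (b (Fin.cast hrank k) : Fin m → F)) = S := by
    have h1 := congrArg (Submodule.map S.subtype) (b.span_eq)
    rw [Submodule.map_span, Submodule.map_top, Submodule.range_subtype] at h1
    have h2 : (Set.range fun k : Fin A.rank => (b (Fin.cast hrank k) : Fin m → F)) =
        ⇑S.subtype '' Set.range ⇑b := by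
      ext x
      constructor
      · rintro ⟨k, rfl⟩; exact ⟨b (Fin.cast hrank k), ⟨_, rfl⟩, rfl⟩
      · rintro ⟨y, ⟨k, rfl⟩, rfl⟩
        exact ⟨Fin.cast hrank.symm k, by simp⟩
    rw [h2, h1]
  rw [hspan]
  exact Submodule.subset_span ⟨j, rfl⟩

/-- Rank bound for the Hadamard (entrywise) product. -/
lemma rank_hadamard_le' {m n : ℕ} {F : Type*} [Field F] (A C : Matrix (Fin m) (Fin n) F) :
    (Matrix.of fun i j => A i j * C i j).rank ≤ A.rank * C.rank := by
  obtain ⟨vA, hvA⟩ := exists_col_basis A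
  obtain ⟨vC, hvC⟩ := exists_col_basis C
  have key : ∀ j, (Matrix.of fun i j => A i j * C i j)ᵀ j ∈
      Submodule.span F (Set.range fun p : Fin A.rank × Fin C.rank => vA p.1 * vC p.2) := by
    intro j
    have hcol : (Matrix.of fun i j => A i j * C i j)ᵀ j = Aᵀ j * Cᵀ j := by
      funext i; simp [Matrix.transpose_apply, Pi.mul_apply]
    rw [hcol]
    have hmul : Aᵀ j * Cᵀ j ∈
        Submodule.span F (Set.range vA) * Submodule.span F (Set.range vC) :=
      Submodule.mul_mem_mul (hvA j) (hvC j)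
    rw [Submodule.span_mul_span] at hmul
    have hset : (Set.range vA * Set.range vC : Set (Fin m → F)) =
        Set.range fun p : Fin A.rank × Fin C.rank => vA p.1 * vC p.2 := by
      ext x
      constructor
      · rintro ⟨a, ⟨k, rfl⟩, c, ⟨l, rfl⟩, rfl⟩; exact ⟨(k, l), rfl⟩
      · rintro ⟨⟨k, l⟩, rfl⟩; exact ⟨vA k, ⟨k, rfl⟩, vC l, ⟨l, rfl⟩, rfl⟩
    rwa [hset] at hmul
  have := rank_le_of_cols_mem _ _ key
  simpa [Fintype.card_prod] using this

/-- Mapping a matrix entrywise by a ring homomorphism does not increase the rank. -/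
lemma rank_map_le' {m n : ℕ} {F : Type*} [Field F] (A : Matrix (Fin m) (Fin n) F)
    (σ : F →+* F) : (A.map σ).rank ≤ A.rank := by
  obtain ⟨vA, hvA⟩ := exists_col_basis A
  have key : ∀ j, (A.map σ)ᵀ j ∈
      Submodule.span F (Set.range fun k => σ ∘ vA k) := by
    intro j
    have hcol : (A.map σ)ᵀ j = σ ∘ (Aᵀ j) := by
      funext i; simp [Matrix.map_apply, Matrix.transpose_apply]
    rw [hcol]
    have : ∀ x ∈ Submodule.span F (Set.range vA),
        σ ∘ x ∈ Submodule.span F (Set.range fun k => σ ∘ vA k) := by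
      intro x hx
      induction hx using Submodule.span_induction with
      | mem x hx =>
          obtain ⟨k, rfl⟩ := hx
          exact Submodule.subset_span ⟨k, rfl⟩
      | zero =>
          have : σ ∘ (0 : Fin m → F) = 0 := by funext i; simp
          rw [this]; exact Submodule.zero_mem _
      | add x y hx hy ihx ihy =>
          have : σ ∘ (x + y) = σ ∘ x + σ ∘ y := by funext i; simp
          rw [this]; exact Submodule.add_mem _ ihx ihy
      | smul c x hx ihx =>
          have : σ ∘ (c • x) = σ c • (σ ∘ x) := by funext i; simp
          rw [this]; exact Submodule.smul_mem _ _ ihx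
    exact this _ (hvA j)
  have := rank_le_of_cols_mem _ _ key
  simpa using this

/-- The main induction, which needs neither the field cardinality nor the bound on `t`. -/
lemma rank_pow_le_aux {m n : ℕ} {F : Type*} [Field F] [CharP F 2]
    (B : Matrix (Fin m) (Fin n) F) :
    ∀ t : ℕ, 0 < t →
      (Matrix.of fun i j => (B i j) ^ t).rank ≤ B.rank ^ (Nat.digits 2 t).sum := by
  haveI : ExpChar F 2 := ExpChar.prime Nat.prime_two
  intro t
  induction t using Nat.strong_induction_on with
  | _ t ih =>
    intro ht
    rcases eq_or_lt_of_le (Nat.one_le_iff_ne_zero.mpr ht.ne') with h1 | h2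
    · -- t = 1
      subst h1
      have : (Matrix.of fun i j => (B i j) ^ 1) = B := by
        ext i j; simp
      rw [this]
      simp
    · -- t ≥ 2
      set q := t / 2 with hq
      have hq0 : 0 < q := Nat.div_pos (by omega) (by norm_num)
      have hqlt : q < t := Nat.div_lt_self ht (by norm_num)
      have hsum : (Nat.digits 2 t).sum = t % 2 + (Nat.digits 2 q).sum := by
        rw [Nat.digits_def' (by norm_num : 1 < 2) ht]
        simp [hq]
      have hIH := ih q hqlt hq0
      have hfrob : ((Matrix.of fun i j => (B i j) ^ q).map (frobenius F 2)) =
          (Matrix.of fun i j => (B i j) ^ (2 * q)) := by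
        ext i j
        simp [Matrix.map_apply, frobenius_def, ← pow_mul, mul_comm]
      have heven : (Matrix.of fun i j => (B i j) ^ (2 * q)).rank ≤
          B.rank ^ (Nat.digits 2 q).sum := by
        rw [← hfrob]
        exact le_trans (rank_map_le' _ _) hIH
      rcases Nat.even_or_odd t with he | ho
      · obtain ⟨c, hc⟩ := he
        have ht2q : t = 2 * q := by omega
        have hmod : t % 2 = 0 := by omega
        rw [hsum, hmod, zero_add, ht2q]
        exact heven
      · have ht2q : t = 2 * q + 1 := by
          rcases ho with ⟨c, hc⟩; omega
        have hmod : t % 2 = 1 := by omega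
        have hM : (Matrix.of fun i j => (B i j) ^ t) =
            (Matrix.of fun i j =>
              (Matrix.of fun i j => (B i j) ^ (2 * q)) i j * B i j) := by
          ext i j
          simp [ht2q, pow_succ]
        rw [hM, hsum, hmod]
        calc (Matrix.of fun i j =>
              (Matrix.of fun i j => (B i j) ^ (2 * q)) i j * B i j).rank
            ≤ (Matrix.of fun i j => (B i j) ^ (2 * q)).rank * B.rank :=
              rank_hadamard_le' _ _
          _ ≤ B.rank ^ (Nat.digits 2 q).sum * B.rank :=
              Nat.mul_le_mul_right _ heven
          _ = B.rank ^ (1 + (Nat.digits 2 q).sum) := by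
              rw [add_comm, pow_succ]

/-- `rank(B^{∘t}) ≤ rank(B)^{τ(t)}` where `τ(t)` is the binary weight of `t`. -/
theorem stmt13 {r m n : ℕ} {F : Type*} [Field F] [Fintype F] [CharP F 2]
    (hF : Fintype.card F = 2 ^ r)
    (B : Matrix (Fin m) (Fin n) F)
    (t : ℕ) (ht : 0 < t) (ht2 : t < 2 ^ r - 1) :
    (Matrix.of fun i j => (B i j) ^ t).rank ≤ B.rank ^ (Nat.digits 2 t).sum :=
  rank_pow_le_aux B t ht
end

section
/- Let GF(2^r) be partitioned into G1 = {0, 1, α, …, α^{m−2}} and G2 = {α^{m−1}, …, α^{2^r−2}} with m ≤ 2^{r−1} and n = 2^r − m. Let B = [λ_i + δ_j] over GF(2^r) with λ_i ∈ G1, δ_j ∈ G2. Then for 1 ≤ t < 2^r − 1, rank(B^{∘t}) = min(m, 2^{ω(t)}), where ω(t) is the binary weight of t. -/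
/-!
In characteristic 2, `(x + y) ^ t = ∏_{i ∈ bits t} (x ^ 2 ^ i + y ^ 2 ^ i)`, so
`(λ + δ) ^ t = ∑_T λ ^ s_T * δ ^ (t - s_T)`, the sum running over the `2 ^ ω(t)` binary submasks
`s_T` of `t`. This factors `B^{∘t} = V_L V_R` through `2 ^ ω(t)` columns. As `t < 2 ^ r - 1` is
below the order of `α`, the nodes `α ^ s_T` are pairwise distinct. Hence `V_R`, with entries
`(α ^ (t - s_T)) ^ (m - 1 + j)` and `n ≥ 2 ^ (r - 1) ≥ 2 ^ ω(t)` columns, contains an invertible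
Vandermonde block and has full row rank, so `rank B^{∘t} = rank V_L`. In `V_L` the row of
`λ = 0` is a unit vector and the other rows form a Vandermonde matrix, which gives
`rank V_L = min(m, 2 ^ ω(t))`.
-/

open Finset Matrix

theorem Nat.sum_digits_two_eq_length_bitIndices (t : ℕ) :
    (Nat.digits 2 t).sum = t.bitIndices.length := by
  induction t using Nat.binaryRec' with
  | zero => simp
  | bit b n h ih =>
    rw [Nat.digits_two_eq_bits] at ih ⊢
    rw [Nat.bits_append_bit _ _ h]
    cases b <;> simp [ih, Nat.add_comm 1]

theorem Nat.length_bitIndices_lt_of_lt_two_pow_sub_one {t r : ℕ} (ht : t < 2 ^ r - 1) :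
    t.bitIndices.length < r := by
  have hsub : t.bitIndices.toFinset ⊆ range r := fun i hi => by
    have := Nat.two_pow_le_of_mem_bitIndices (List.mem_toFinset.1 hi)
    exact mem_range.2 ((Nat.pow_lt_pow_iff_right (by norm_num : 1 < 2)).1 (by omega))
  rw [← List.toFinset_card_of_nodup Nat.bitIndices_nodup]
  refine (card_range r ▸ card_le_card hsub).lt_of_ne fun h => ht.ne ?_
  rw [← Finset.sum_toFinset_bitIndices_two_pow t,
    eq_of_subset_of_card_le hsub ((card_range r).trans_le h.ge), Nat.geomSum_eq le_rfl]
  simp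

theorem Nat.card_finset_toFinset_bitIndices (t : ℕ) :
    Fintype.card (Finset t.bitIndices.toFinset) = 2 ^ (Nat.digits 2 t).sum := by
  rw [Fintype.card_finset, Fintype.card_coe, List.toFinset_card_of_nodup Nat.bitIndices_nodup,
    Nat.sum_digits_two_eq_length_bitIndices]

/-- For `s = t.bitIndices.toFinset` the numbers `submask T` are the binary submasks of `t`,
i.e. (Lucas) the `k` for which `t.choose k` is odd. -/
def submask {s : Finset ℕ} (T : Finset s) : ℕ := ∑ i ∈ T, 2 ^ (i : ℕ)

theorem submask_injective (s : Finset ℕ) : Function.Injective (submask (s := s)) := by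
  intro T T' h
  refine Finset.map_injective (Function.Embedding.subtype _) (Finset.geomSum_injective le_rfl ?_)
  simpa [submask] using h

theorem submask_eq_zero_iff {s : Finset ℕ} {T : Finset s} : submask T = 0 ↔ T = ∅ := by
  simp [submask, sum_eq_zero_iff, eq_empty_iff_forall_notMem]

theorem submask_add_submask_compl {s : Finset ℕ} (T : Finset s) :
    submask T + submask Tᶜ = ∑ i ∈ s, 2 ^ i := by
  rw [submask, submask, sum_add_sum_compl, ← Finset.sum_coe_sort s]

theorem submask_le {t : ℕ} (T : Finset t.bitIndices.toFinset) : submask T ≤ t := by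
  have := submask_add_submask_compl T
  rw [Finset.sum_toFinset_bitIndices_two_pow] at this
  omega

theorem pow_submask_injective {M : Type*} [Monoid M] {x : M} {t : ℕ} (ht : t < orderOf x) :
    Function.Injective fun T : Finset t.bitIndices.toFinset => x ^ submask T :=
  fun T T' h => submask_injective _ <|
    pow_injOn_Iio_orderOf ((submask_le T).trans_lt ht) ((submask_le T').trans_lt ht) h

theorem add_pow_eq_sum_submask {R : Type*} [CommSemiring R] [CharP R 2] (t : ℕ) (x y : R) :
    (x + y) ^ t = ∑ T : Finset t.bitIndices.toFinset, x ^ submask T * y ^ submask Tᶜ := by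
  have : Fact (Nat.Prime 2) := ⟨Nat.prime_two⟩
  conv_lhs => rw [← Finset.sum_toFinset_bitIndices_two_pow t, ← Finset.sum_coe_sort,
    ← prod_pow_eq_pow_sum]
  simp only [add_pow_char_pow, Fintype.prod_add, prod_pow_eq_pow_sum, submask]

namespace Matrix

variable {K : Type*} [Field K]

theorem rank_mul_eq_left_of_rank_eq_card {m n o : Type*} [Fintype n] [Fintype o]
    (A : Matrix m n K) (B : Matrix n o K) (hB : B.rank = Fintype.card n) :
    (A * B).rank = A.rank := by
  have hsurj : LinearMap.range B.mulVecLin = ⊤ :=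
    Submodule.eq_top_of_finrank_eq (by rw [← rank, hB, Module.finrank_fintype_fun_eq_card])
  rw [rank, rank, mulVecLin_mul, LinearMap.range_comp, hsurj, Submodule.map_top]

theorem le_rank_of_det_submatrix_ne_zero {m n : Type*} [Fintype n] {k : ℕ} (A : Matrix m n K)
    (r : Fin k → m) (c : Fin k → n) (h : (A.submatrix r c).det ≠ 0) : k ≤ A.rank :=
  calc k = (A.submatrix r c).rank := by
        rw [rank_of_isUnit _ ((isUnit_iff_isUnit_det _).2 h.isUnit), Fintype.card_fin]
    _ ≤ A.rank := rank_submatrix_le A r c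

theorem rank_of_pow_add {ι : Type*} [Fintype ι] {ζ : ι → K} (hζ : Function.Injective ζ)
    (hζ0 : ∀ j, ζ j ≠ 0) (a : ℕ) {p : ℕ} (hp : Fintype.card ι ≤ p) :
    (of fun j (i : Fin p) => ζ j ^ (a + i)).rank = Fintype.card ι := by
  refine le_antisymm (rank_le_card_height _) ?_
  set e := Fintype.equivFin ι
  apply le_rank_of_det_submatrix_ne_zero _ e.symm (Fin.castLE hp)
  have hblock : (of fun j (i : Fin p) => ζ j ^ (a + i)).submatrix e.symm (Fin.castLE hp) =
      diagonal (fun u => ζ (e.symm u) ^ a) * vandermonde (ζ ∘ e.symm) := by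
    ext u v
    simp [vandermonde, pow_add]
  rw [hblock, det_mul, det_diagonal]
  exact mul_ne_zero (prod_ne_zero_iff.2 fun u _ => pow_ne_zero _ (hζ0 _))
    (det_vandermonde_ne_zero_iff.2 (hζ.comp e.symm.injective))

theorem det_eq_det_submatrix_succ_of_row_zero {R : Type*} [CommRing R] {k : ℕ}
    (W : Matrix (Fin (k + 1)) (Fin (k + 1)) R) (h : W 0 = Pi.single 0 1) :
    W.det = (W.submatrix Fin.succ Fin.succ).det := by
  rw [det_succ_row_zero, Fintype.sum_eq_single 0 fun j hj => by simp [h, hj]]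
  simp [h]

theorem rank_eq_min_of_row_zero_single {ι : Type*} [Fintype ι] [DecidableEq ι] {m : ℕ}
    {V : Matrix (Fin m) ι K} {ζ : ι → K} (hζ : Function.Injective ζ) (j₀ : ι)
    (hV : ∀ i j, V i j = if (i : ℕ) = 0 then (Pi.single j₀ 1 : ι → K) j else ζ j ^ ((i : ℕ) - 1)) :
    V.rank = min m (Fintype.card ι) := by
  refine le_antisymm
    (le_min ((rank_le_card_height V).trans_eq (Fintype.card_fin m)) (rank_le_card_width V)) ?_
  generalize hk : min m (Fintype.card ι) = k
  cases k with
  | zero => exact Nat.zero_le _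
  | succ k =>
    have hkm : k + 1 ≤ m := hk ▸ min_le_left _ _
    have hkι : k ≤ Fintype.card {j // j ≠ j₀} := by
      have := hk ▸ min_le_right m (Fintype.card ι)
      simp only [ne_eq, Fintype.card_subtype_compl, Fintype.card_unique]
      omega
    -- with column `j₀` first, row 0 of the minor is a unit vector
    set c : Fin (k + 1) → ι :=
      Fin.cons j₀ fun u => (Fintype.equivFin {j // j ≠ j₀}).symm (Fin.castLE hkι u)
    have hc : ∀ u : Fin k, c u.succ ≠ j₀ := fun u =>
      ((Fintype.equivFin {j // j ≠ j₀}).symm (Fin.castLE hkι u)).2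
    apply le_rank_of_det_submatrix_ne_zero V (Fin.castLE hkm) c
    rw [det_eq_det_submatrix_succ_of_row_zero]
    · have hminor : (V.submatrix (Fin.castLE hkm) c).submatrix Fin.succ Fin.succ =
          (vandermonde (ζ ∘ c ∘ Fin.succ))ᵀ := by
        ext i u
        simp [hV, vandermonde]
      rw [hminor, det_transpose, det_vandermonde_ne_zero_iff]
      exact hζ.comp <| Subtype.val_injective.comp <|
        (Fintype.equivFin _).symm.injective.comp (Fin.castLE_injective hkι)
    · funext u
      cases u using Fin.cases with
      | zero => simp [hV, c]
      | succ u => simp [hV, hc u]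

end Matrix

theorem stmt16_general {r m n : ℕ} (hm2 : m ≤ 2 ^ (r - 1))
    (hn : n = 2 ^ r - m)
    {F : Type*} [Field F] [CharP F 2]
    (α : F) (hα : orderOf α = 2 ^ r - 1)
    (lam : Fin m → F)
    (hlam : ∀ i : Fin m, lam i = if (i : ℕ) = 0 then 0 else α ^ ((i : ℕ) - 1))
    (del : Fin n → F) (hdel : ∀ j : Fin n, del j = α ^ (m - 1 + (j : ℕ)))
    (t : ℕ) (ht2 : t < 2 ^ r - 1) :
    (Matrix.of fun i j => (lam i + del j) ^ t).rank =
      min m (2 ^ (Nat.digits 2 t).sum) := by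
  classical
  have hθ := Nat.card_finset_toFinset_bitIndices t
  have hθn : Fintype.card (Finset t.bitIndices.toFinset) ≤ n := by
    have hlen := Nat.length_bitIndices_lt_of_lt_two_pow_sub_one ht2
    have hr : 2 ^ r = 2 * 2 ^ (r - 1) := by rw [← pow_succ']; congr; omega
    have := Nat.pow_le_pow_right two_pos (Nat.le_sub_one_of_lt hlen)
    rw [hθ, Nat.sum_digits_two_eq_length_bitIndices]
    omega
  have hα0 : α ≠ 0 := (orderOf_pos_iff.1 (by omega)).isUnit.ne_zero
  have hpow := pow_submask_injective (hα ▸ ht2 : t < orderOf α)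
  have hfac : (of fun i j => (lam i + del j) ^ t) =
      (of fun i (T : Finset t.bitIndices.toFinset) => lam i ^ submask T) *
        of fun (T : Finset t.bitIndices.toFinset) (j : Fin n) =>
          (α ^ submask Tᶜ) ^ (m - 1 + (j : ℕ)) := by
    ext i j
    simp [mul_apply, add_pow_eq_sum_submask, hdel, ← pow_mul, mul_comm]
  rw [hfac, rank_mul_eq_left_of_rank_eq_card _ _
    (rank_of_pow_add (ζ := fun T => α ^ submask Tᶜ) (hpow.comp compl_injective)
      (fun _ => pow_ne_zero _ hα0) _ hθn),
    rank_eq_min_of_row_zero_single hpow ∅, hθ]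
  intro i T
  rw [of_apply, hlam]
  split_ifs
  · simp [zero_pow_eq, submask_eq_zero_iff, Pi.single_apply]
  · rw [pow_right_comm]

/-- For the consecutive-powers partition `G1 = {0,1,α,…,α^{m-2}}`,
`G2 = {α^{m-1},…,α^{2^r-2}}` with `m ≤ 2^{r-1}` and `n = 2^r - m`, the Hadamard
power `B^{∘t}` of `B = [λ_i + δ_j]` has rank `min(m, 2^{ω(t)})`. -/
theorem stmt16 {r m n : ℕ} (hr : 0 < r) (hm : 1 ≤ m) (hm2 : m ≤ 2 ^ (r - 1))
    (hn : n = 2 ^ r - m)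
    {F : Type*} [Field F] [Fintype F] [CharP F 2] (hF : Fintype.card F = 2 ^ r)
    (α : F) (hα : orderOf α = 2 ^ r - 1)
    (lam : Fin m → F)
    (hlam : ∀ i : Fin m, lam i = if (i : ℕ) = 0 then 0 else α ^ ((i : ℕ) - 1))
    (del : Fin n → F) (hdel : ∀ j : Fin n, del j = α ^ (m - 1 + (j : ℕ)))
    (t : ℕ) (ht1 : 1 ≤ t) (ht2 : t < 2 ^ r - 1) :
    (Matrix.of fun i j => (lam i + del j) ^ t).rank =
      min m (2 ^ (Nat.digits 2 t).sum) :=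
  stmt16_general hm2 hn α hα lam hlam del hdel t ht2
end

section
/- Let B_lat be the q×q Latin square matrix over GF(q), q = 2^r, with entries x − y for x,y ranging over GF(q), and let B(m,n) be its upper-left m×n submatrix with the row/column index ordering (α^0, α, …, α^{q−2}, 0). If n ≥ q/2 and m ≥ 2, then for 1 ≤ t < 2^r − 1, rank(B(m,n)^{∘t}) = min(m, 2^{ω(t)}), where ω(t) is the binary weight of t. -/
open Finset Matrix

lemma aux_bitIndices_length (n : ℕ) : n.bitIndices.length = (Nat.digits 2 n).sum := by
  induction n using Nat.strong_induction_on with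
  | _ n ih =>
    rcases Nat.eq_zero_or_pos n with rfl | hn
    · simp
    have hd : Nat.digits 2 n = n % 2 :: Nat.digits 2 (n / 2) :=
      Nat.digits_def' one_lt_two hn
    have hdiv : n / 2 < n := Nat.div_lt_self hn one_lt_two
    rcases Nat.mod_two_eq_zero_or_one n with h | h
    · have hrep : n = 2 * (n / 2) := by omega
      rw [hd, List.sum_cons, h, zero_add, ← ih _ hdiv]
      conv_lhs => rw [hrep]
      rw [Nat.bitIndices_two_mul, List.length_map]
    · have hrep : n = 2 * (n / 2) + 1 := by omega
      rw [hd, List.sum_cons, h, ← ih _ hdiv]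
      conv_lhs => rw [hrep]
      rw [Nat.bitIndices_two_mul_add_one, List.length_cons, List.length_map]
      omega

lemma aux_rank_ge {K : Type*} [Field K] {m s : ℕ} {ι : Type*} [Fintype ι] [DecidableEq ι]
    (A : Matrix (Fin m) ι K) (f : Fin s → Fin m) (g : Fin s → ι)
    (h : IsUnit (A.submatrix f g).det) : s ≤ A.rank := by
  classical
  let P : Matrix (Fin s) (Fin m) K := Matrix.of fun a i => if i = f a then 1 else 0
  let Q : Matrix ι (Fin s) K := Matrix.of fun i b => if i = g b then 1 else 0
  have hPAQ : P * A * Q = A.submatrix f g := by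
    ext a b
    simp [P, Q, Matrix.mul_apply, ite_mul, mul_ite]
  have h1 : (A.submatrix f g).rank = s := by
    rw [Matrix.rank_of_isUnit _ ((Matrix.isUnit_iff_isUnit_det _).mpr h)]
    simp
  calc s = (A.submatrix f g).rank := h1.symm
    _ = (P * A * Q).rank := by rw [hPAQ]
    _ ≤ (P * A).rank := Matrix.rank_mul_le_left _ _
    _ ≤ A.rank := Matrix.rank_mul_le_right _ _

/-- Ranks of Hadamard powers of upper-left m×n submatrices of the Latin-square
base matrix over GF(2^r), with index ordering `(α^0, α, …, α^{q-2}, 0)`: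
for `n ≥ 2^{r-1}`, `m ≥ 2`, `1 ≤ t < 2^r - 1`,
`rank(B(m,n)^{∘t}) = min(m, 2^{ω(t)})`. -/
theorem stmt19 {r m n : ℕ} (hr : 0 < r) (hm : 2 ≤ m) (hmq : m ≤ 2 ^ r)
    (hn : 2 ^ (r - 1) ≤ n) (hnq : n ≤ 2 ^ r)
    {F : Type*} [Field F] [Fintype F] [CharP F 2] (hF : Fintype.card F = 2 ^ r)
    (α : F) (hα : orderOf α = 2 ^ r - 1)
    (eps : ℕ → F) (heps : ∀ k, eps k = if k < 2 ^ r - 1 then α ^ k else 0)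
    (t : ℕ) (ht1 : 1 ≤ t) (ht2 : t < 2 ^ r - 1) :
    (Matrix.of fun (i : Fin m) (j : Fin n) => (eps i - eps j) ^ t).rank =
      min m (2 ^ (Nat.digits 2 t).sum) := by
  classical
  haveI : Fact (Nat.Prime 2) := ⟨Nat.prime_two⟩
  have hr2 : 2 ≤ r := by
    rcases Nat.lt_or_ge r 2 with h | h
    · interval_cases r <;> omega
    · exact h
  set w : ℕ := (Nat.digits 2 t).sum with hw
  set T : Finset ℕ := t.bitIndices.toFinset with hT
  set e : Finset ℕ → ℕ := fun s => ∑ i ∈ s, 2 ^ i with he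
  have hTsum : e T = t := Finset.twoPowSum_toFinset_bitIndices t
  have heinj : Function.Injective e := Finset.geomSum_injective le_rfl
  have hTcard : T.card = w := by
    rw [hT, List.toFinset_card_of_nodup Nat.bitIndices_sorted.nodup,
      aux_bitIndices_length, hw]
  have hTlt : ∀ i ∈ T, i < r := by
    intro i hi
    have h1 : 2 ^ i ≤ t := Nat.two_pow_le_of_mem_bitIndices (List.mem_toFinset.mp hi)
    have h2 : 2 ^ i < 2 ^ r := by omega
    exact (Nat.pow_lt_pow_iff_right one_lt_two).mp h2
  have hwr : w ≤ r - 1 := by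
    by_contra hcon
    have hsub : T ⊆ Finset.range r := fun i hi => Finset.mem_range.mpr (hTlt i hi)
    have hTeq : T = Finset.range r := by
      apply Finset.eq_of_subset_of_card_le hsub
      rw [Finset.card_range, hTcard]; omega
    have : t = 2 ^ r - 1 := by
      rw [← hTsum, he]
      simp only [hTeq]
      rw [Nat.geomSum_eq le_rfl r]
      omega
    omega
  set θ : ℕ := 2 ^ w with hθ
  have hθr : θ ≤ 2 ^ (r - 1) := Nat.pow_le_pow_right (by norm_num) hwr
  have hθn : θ ≤ n := le_trans hθr hn
  have h2r1 : 2 ^ (r - 1) < 2 ^ r - 1 := by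
    have h1 : 2 ^ r = 2 * 2 ^ (r - 1) := by
      rw [← pow_succ']
      congr 1
      omega
    have h2 : 2 ≤ 2 ^ (r - 1) := by
      calc 2 = 2 ^ 1 := (pow_one 2).symm
      _ ≤ 2 ^ (r - 1) := Nat.pow_le_pow_right (by norm_num) (by omega)
    omega
  have hθq : θ < 2 ^ r - 1 := lt_of_le_of_lt hθr h2r1
  have hαinj : ∀ a b : ℕ, a ≤ t → b ≤ t → α ^ a = α ^ b → a = b := by
    intro a b ha hb hab
    have h1 : a < orderOf α := by rw [hα]; omega
    have h2 : b < orderOf α := by rw [hα]; omega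
    exact pow_injOn_Iio_orderOf h1 h2 hab
  have hesub : ∀ u ∈ T.powerset, e u ≤ t ∧ e (T \ u) = t - e u := by
    intro u hu
    have hsub : u ⊆ T := Finset.mem_powerset.mp hu
    have h1 : e (T \ u) + e u = e T := Finset.sum_sdiff (f := fun i => 2 ^ i) hsub
    rw [hTsum] at h1
    omega
  have hcard : Fintype.card {x : Finset ℕ // x ∈ T.powerset} = θ := by
    rw [Fintype.card_coe, Finset.card_powerset, hTcard]
  obtain ⟨eι⟩ : Nonempty (Fin θ ≃ {x : Finset ℕ // x ∈ T.powerset}) :=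
    ⟨(Fintype.equivFinOfCardEq hcard).symm⟩
  have expand : ∀ x y : F, (x - y) ^ t = ∑ u ∈ T.powerset, x ^ (t - e u) * y ^ (e u) := by
    intro x y
    rw [CharTwo.sub_eq_add]
    conv_lhs => rw [← hTsum, he, ← Finset.prod_pow_eq_pow_sum]
    rw [Finset.prod_congr rfl (fun i _ => by
      rw [add_pow_char_pow (x := x) (y := y), add_comm] :
        ∀ i ∈ T, (x + y) ^ 2 ^ i = y ^ 2 ^ i + x ^ 2 ^ i), Finset.prod_add]
    refine Finset.sum_congr rfl fun u hu => ?_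
    rw [Finset.prod_pow_eq_pow_sum, Finset.prod_pow_eq_pow_sum]
    show y ^ e u * x ^ e (T \ u) = x ^ (t - e u) * y ^ e u
    rw [(hesub u hu).2, mul_comm]
  set A : Matrix (Fin m) {x : Finset ℕ // x ∈ T.powerset} F :=
    Matrix.of (fun i s => eps i ^ (t - e s.1)) with hA
  set B : Matrix {x : Finset ℕ // x ∈ T.powerset} (Fin n) F :=
    Matrix.of (fun s j => eps j ^ (e s.1)) with hB
  have hM : (Matrix.of fun (i : Fin m) (j : Fin n) => (eps i - eps j) ^ t) = A * B := by
    ext i j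
    rw [Matrix.of_apply, Matrix.mul_apply, expand, ← Finset.sum_coe_sort]
    rfl
  have hepsα : ∀ k : ℕ, k < 2 ^ r - 1 → eps k = α ^ k := by
    intro k hk
    rw [heps k, if_pos hk]
  -- the right factor B has a right inverse
  set g : {x : Finset ℕ // x ∈ T.powerset} → Fin n :=
    fun s => ⟨(eι.symm s : ℕ), lt_of_lt_of_le (eι.symm s).isLt hθn⟩ with hg
  set V : Matrix {x : Finset ℕ // x ∈ T.powerset} {x : Finset ℕ // x ∈ T.powerset} F :=
    B.submatrix id g with hV
  have hVdet : IsUnit V.det := by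
    have hWV : V.submatrix eι eι = Matrix.vandermonde (fun a : Fin θ => α ^ e (eι a).1) := by
      ext a b
      show B (eι a) (g (eι b)) = _
      have hval : ((g (eι b)) : ℕ) = (b : ℕ) := by simp [hg]
      have hjlt : ((g (eι b)) : ℕ) < 2 ^ r - 1 := by
        rw [hval]
        have := b.isLt
        omega
      rw [hB, Matrix.of_apply, hepsα _ hjlt, Matrix.vandermonde_apply, hval,
        ← pow_mul, ← pow_mul, mul_comm]
    have hinj : Function.Injective (fun a : Fin θ => α ^ e (eι a).1) := by
      intro a b hab
      have h1 : e (eι a).1 = e (eι b).1 :=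
        hαinj _ _ (hesub _ (eι a).2).1 (hesub _ (eι b).2).1 hab
      exact eι.injective (Subtype.ext (heinj h1))
    have hne : V.det ≠ 0 := by
      rw [← Matrix.det_submatrix_equiv_self eι V, hWV]
      exact Matrix.det_vandermonde_ne_zero_iff.mpr hinj
    exact isUnit_iff_ne_zero.mpr hne
  set S : Matrix (Fin n) {x : Finset ℕ // x ∈ T.powerset} F :=
    Matrix.of (fun j s => if j = g s then 1 else 0) with hS
  have hBS : B * S = V := by
    ext s s'
    rw [Matrix.mul_apply]
    simp only [hS, Matrix.of_apply, mul_ite, mul_one, mul_zero]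
    rw [Finset.sum_ite_eq' Finset.univ (g s') (fun j => B s j)]
    simp [hV]
  have hBC : B * (S * V⁻¹) = 1 := by
    rw [← Matrix.mul_assoc, hBS, Matrix.mul_nonsing_inv _ hVdet]
  have hAfact : A = (A * B) * (S * V⁻¹) := by
    rw [Matrix.mul_assoc, hBC, Matrix.mul_one]
  -- rank bounds
  have hup : (A * B).rank ≤ min m θ := by
    refine le_min (le_trans (Matrix.rank_le_card_height _) (by simp)) ?_
    exact le_trans (Matrix.rank_mul_le_left _ _)
      (le_trans (Matrix.rank_le_card_width _) (le_of_eq hcard))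
  have hAup : A.rank ≤ (A * B).rank := by
    calc A.rank = ((A * B) * (S * V⁻¹)).rank := by rw [← hAfact]
      _ ≤ (A * B).rank := Matrix.rank_mul_le_left _ _
  set s0 : ℕ := min m θ with hs0
  have hs0m : s0 ≤ m := min_le_left _ _
  have hs0θ : s0 ≤ θ := min_le_right _ _
  have hlow : s0 ≤ A.rank := by
    apply aux_rank_ge A (fun k => Fin.castLE hs0m k) (fun k => eι (Fin.castLE hs0θ k))
    have hD : A.submatrix (fun k => Fin.castLE hs0m k) (fun k => eι (Fin.castLE hs0θ k)) =
        (Matrix.vandermonde (fun k : Fin s0 => α ^ (t - e (eι (Fin.castLE hs0θ k)).1)))ᵀ := by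
      ext i k
      show eps ((Fin.castLE hs0m i : Fin m) : ℕ) ^ (t - e (eι (Fin.castLE hs0θ k)).1) = _
      have hilt : ((Fin.castLE hs0m i : Fin m) : ℕ) < 2 ^ r - 1 := by
        have := i.isLt
        simp only [Fin.coe_castLE]
        omega
      rw [hepsα _ hilt, Matrix.transpose_apply, Matrix.vandermonde_apply]
      simp only [Fin.coe_castLE]
      rw [← pow_mul, ← pow_mul, mul_comm]
    rw [hD, Matrix.det_transpose, isUnit_iff_ne_zero]
    apply Matrix.det_vandermonde_ne_zero_iff.mpr
    intro a b hab
    have ha := (hesub _ (eι (Fin.castLE hs0θ a)).2).1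
    have hb := (hesub _ (eι (Fin.castLE hs0θ b)).2).1
    have h1 : t - e (eι (Fin.castLE hs0θ a)).1 = t - e (eι (Fin.castLE hs0θ b)).1 :=
      hαinj _ _ (by omega) (by omega) hab
    have h2 : e (eι (Fin.castLE hs0θ a)).1 = e (eι (Fin.castLE hs0θ b)).1 := by omega
    have h3 : Fin.castLE hs0θ a = Fin.castLE hs0θ b :=
      eι.injective (Subtype.ext (heinj h2))
    exact Fin.ext (by simpa [Fin.ext_iff] using h3)
  rw [hM]
  exact le_antisymm hup (le_trans hlow hAup)
end
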